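/- Suppose D = {P_i}_{i=1}^∞ is a countable (or finite) set with O ∉ D and O ∉ closure(D), and let σ = {ρ(x)x : x ∈ Ω̄} be a reflector from Ω̄ to D. Then the set S = {x ∈ Ω̄ : there exist P_i ≠ P_j in D such that x ∈ τ_σ(P_i) ∩ τ_σ(P_j)} has surface measure zero in S². -/

import Mathlib

noncomputable section

open MeasureTheory Metric Set Filter Topology
attribute [local instance] Classical.propDecidable

/-- Real inner product on `ℝ³`. -/
noncomputable def rinner (x y : EuclideanSpace ℝ (Fin 3)) : ℝ := inner ℝ x y

/-- Euclidean 3-space. -/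
abbrev E3 : Type := EuclideanSpace ℝ (Fin 3)

/-- The unit sphere `S²` in `ℝ³`. -/
def sphere2 : Set E3 := Metric.sphere (0 : E3) 1

/-- Unit vector `m = P/OP` in the direction of `P`. -/
noncomputable def axisDir (P : E3) : E3 := ‖P‖⁻¹ • P

/-- Eccentricity `ε = √(1 + d²/OP²) − d/OP` of the ellipsoid `E_d(P)`. -/
noncomputable def ecc (P : E3) (d : ℝ) : ℝ :=
  Real.sqrt (1 + d ^ 2 / ‖P‖ ^ 2) - d / ‖P‖

/-- Polar radius `ρ_d(x) = d/(1 − ε x·m)` of the ellipsoid `E_d(P)`. -/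
noncomputable def polarRadius (P : E3) (d : ℝ) (x : E3) : ℝ :=
  d / (1 - ecc P d * rinner x (axisDir P))

/-- The constant `c_δ = √(1 + δ²) − δ`. -/
noncomputable def cconst (δ : ℝ) : ℝ := Real.sqrt (1 + δ ^ 2) - δ

/-- Outer unit normal `(x − εm)/|x − εm|` of the ellipsoid `E_d(P)` at the point `ρ_d(x)x`. -/
noncomputable def normalVec (P : E3) (d : ℝ) (x : E3) : E3 :=
  ‖x - ecc P d • axisDir P‖⁻¹ • (x - ecc P d • axisDir P)

/-- The ellipsoid `E_d(P)` supports the surface `{ρ(x)x : x ∈ closure Ω}` at `ρ(x₀)x₀`. -/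
def IsSupportingAt (Ω : Set E3) (ρ : E3 → ℝ) (P : E3) (d : ℝ) (x₀ : E3) : Prop :=
  P ≠ 0 ∧ 0 < d ∧ (∀ x ∈ closure Ω, ρ x ≤ polarRadius P d x) ∧
    ρ x₀ = polarRadius P d x₀

/-- `{ρ(x)x : x ∈ closure Ω}` is a reflector from `closure Ω` to the target `D`. -/
def IsReflector (Ω D : Set E3) (ρ : E3 → ℝ) : Prop :=
  (∀ x ∈ closure Ω, 0 < ρ x) ∧
  ∀ x₀ ∈ closure Ω, ∃ P ∈ D, ∃ d : ℝ, IsSupportingAt Ω ρ P d x₀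

/-- Tracing set `τ_σ(E)`: directions reflected into `E`. -/
def tracing (Ω : Set E3) (ρ : E3 → ℝ) (E : Set E3) : Set E3 :=
  {x | x ∈ closure Ω ∧ ∃ P ∈ E, ∃ d : ℝ, IsSupportingAt Ω ρ P d x}

/-- The class `A(δ)`: reflectors all of whose points admit a supporting ellipsoid with
`d ≥ δ M`. -/
def InClassA (Ω D : Set E3) (ρ : E3 → ℝ) (δ M : ℝ) : Prop :=
  IsReflector Ω D ρ ∧
  ∀ x₀ ∈ closure Ω, ∃ P ∈ D, ∃ d : ℝ, δ * M ≤ d ∧ IsSupportingAt Ω ρ P d x₀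

/-- The boundary `∂Ω` of `Ω` relative to the sphere `S²`. -/
def sphFrontier (Ω : Set E3) : Set E3 := closure Ω ∩ closure (sphere2 \ Ω)

/-- `D` is contained in a plane of `ℝ³`. -/
def InPlane (D : Set E3) : Prop :=
  ∃ v : E3, v ≠ 0 ∧ ∃ c : ℝ, ∀ P ∈ D, rinner P v = c

/-- The set `S` of directions traced to two distinct target points. -/
def ambigSet (Ω D : Set E3) (ρ : E3 → ℝ) : Set E3 :=
  {x | x ∈ closure Ω ∧ ∃ P₁ ∈ D, ∃ P₂ ∈ D, P₁ ≠ P₂ ∧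
    x ∈ tracing Ω ρ {P₁} ∧ x ∈ tracing Ω ρ {P₂}}

/-- A canonical selection of the outer unit normal `ν(x)` of the reflector; at every point
where the supporting ellipsoid is unique (a.e. point) this is the normal of the
supporting ellipsoid. -/
noncomputable def nuSel (Ω D : Set E3) (ρ : E3 → ℝ) (x : E3) : E3 :=
  if h : ∃ p : E3 × ℝ, p.1 ∈ D ∧ IsSupportingAt Ω ρ p.1 p.2 x then
    normalVec h.choose.1 h.choose.2 x
  else 0

/-- A canonical selection of the reflector map `𝒩_σ(x)`; at every point with a unique
supporting ellipsoid (a.e. point) this is the target point the ray `x` is reflected to. -/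
noncomputable def reflMapSel (Ω D : Set E3) (ρ : E3 → ℝ) (x : E3) : E3 :=
  if h : ∃ p : E3 × ℝ, p.1 ∈ D ∧ IsSupportingAt Ω ρ p.1 p.2 x then h.choose.1 else 0

/-- The reflector measure `μ(E) = ∫_{τ_σ(E)} f(x) (x·ν(x))/ρ(x)² dx`,
the irradiance received on `E ⊆ D`. -/
noncomputable def reflMeasure (Ω D : Set E3) (ρ f : E3 → ℝ) (E : Set E3) : ℝ :=
  ∫ x in tracing Ω ρ E, f x * rinner x (nuSel Ω D ρ x) / ρ x ^ 2 ∂μH[2]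


/-!
For a fixed focus `P`, the polar radius `ρ_d(x)` of `E_d(P)` is strictly increasing in `d`, so
all supporting ellipsoids of `σ` with focus `P` have the same parameter `d`: every direction
traced to `P` lies on one ellipsoid `E_d(P)`. For `P₁ ≠ P₂`, the equation
`d₁ (1 − ε₂ x·m₂) = d₂ (1 − ε₁ x·m₁)` is affine in `x`, and it is not trivial since the two
ellipsoids differ; hence the directions traced to both lie on a plane section of `S²`, a circle,
which has `H²`-measure zero. A countable union over pairs of targets finishes the proof.
-/

lemma ecc_eq (P : E3) (d : ℝ) : ecc P d = √(1 + (d / ‖P‖) ^ 2) - d / ‖P‖ := by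
  rw [ecc, div_pow]

lemma ecc_mul_ecc_add (P : E3) (d : ℝ) : ecc P d * (ecc P d + 2 * (d / ‖P‖)) = 1 := by
  have h := Real.sq_sqrt (by positivity : 0 ≤ 1 + (d / ‖P‖) ^ 2)
  rw [ecc_eq]
  linear_combination h

lemma ecc_pos (P : E3) (d : ℝ) : 0 < ecc P d := by
  rw [ecc_eq, sub_pos]
  calc d / ‖P‖ ≤ |d / ‖P‖| := le_abs_self _
    _ = √((d / ‖P‖) ^ 2) := (Real.sqrt_sq_eq_abs _).symm
    _ < √(1 + (d / ‖P‖) ^ 2) := Real.sqrt_lt_sqrt (sq_nonneg _) (by linarith)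

lemma ecc_lt_one {P : E3} (hP : P ≠ 0) {d : ℝ} (hd : 0 < d) : ecc P d < 1 := by
  have hs : 0 < d / ‖P‖ := div_pos hd (norm_pos_iff.2 hP)
  nlinarith [ecc_mul_ecc_add P d, ecc_pos P d]

lemma norm_axisDir {P : E3} (hP : P ≠ 0) : ‖axisDir P‖ = 1 := by
  rw [axisDir, norm_smul, norm_inv, norm_norm, inv_mul_cancel₀ (norm_ne_zero_iff.2 hP)]

lemma norm_smul_axisDir (P : E3) : ‖P‖ • axisDir P = P := by
  rcases eq_or_ne P 0 with rfl | hP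
  · simp [axisDir]
  · rw [axisDir, smul_inv_smul₀ (norm_ne_zero_iff.2 hP)]

lemma abs_rinner_axisDir_le_one {P x : E3} (hP : P ≠ 0) (hx : ‖x‖ = 1) :
    |rinner x (axisDir P)| ≤ 1 := by
  simpa [rinner, hx, norm_axisDir hP] using abs_real_inner_le_norm x (axisDir P)

lemma one_sub_ecc_mul_rinner_pos {P x : E3} (hP : P ≠ 0) {d : ℝ} (hd : 0 < d) (hx : ‖x‖ = 1) :
    0 < 1 - ecc P d * rinner x (axisDir P) := by
  have ht := abs_le.1 (abs_rinner_axisDir_le_one hP hx)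
  nlinarith [ecc_pos P d, ecc_lt_one hP hd]

lemma polarRadius_lt_polarRadius {P x : E3} (hP : P ≠ 0) (hx : ‖x‖ = 1) {d d' : ℝ}
    (hd : 0 < d) (hdd' : d < d') : polarRadius P d x < polarRadius P d' x := by
  have hd' : 0 < d' := hd.trans hdd'
  rw [polarRadius, polarRadius, div_lt_div_iff₀ (one_sub_ecc_mul_rinner_pos hP hd hx)
    (one_sub_ecc_mul_rinner_pos hP hd' hx)]
  have ht := abs_le.1 (abs_rinner_axisDir_le_one hP hx)
  have hk := ecc_mul_ecc_add P d
  have hk' := ecc_mul_ecc_add P d'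
  have he := ecc_pos P d
  have he' := ecc_pos P d'
  have he1 := ecc_lt_one hP hd
  have he1' := ecc_lt_one hP hd'
  have hp : 0 < ‖P‖ := norm_pos_iff.2 hP
  have hs : 0 < d / ‖P‖ := div_pos hd hp
  have hss' : d / ‖P‖ < d' / ‖P‖ := div_lt_div_of_pos_right hdd' hp
  rw [← div_lt_div_iff_of_pos_right hp, mul_div_right_comm, mul_div_right_comm d']
  generalize ecc P d = e, ecc P d' = e', rinner x (axisDir P) = t, d / ‖P‖ = s,
    d' / ‖P‖ = s' at *
  have hee' : e' < e := by
    by_contra! h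
    nlinarith [mul_pos he (sub_pos.2 hss'),
      mul_nonneg (sub_nonneg.2 h) (by linarith : 0 ≤ e + e' + 2 * s')]
  -- `e (e + 2 s) = 1` eliminates `s`, and `1 + e e' - t (e + e') ≥ (1 - e) (1 - e') > 0`.
  have key : 2 * e * e' * (s * (1 - e' * t) - s' * (1 - e * t))
      = -((e - e') * (1 + e * e' - t * (e + e'))) := by
    linear_combination (1 - e' * t) * e' * hk - (1 - e * t) * e * hk'
  have hfac : 0 < (e - e') * (1 + e * e' - t * (e + e')) :=
    mul_pos (sub_pos.2 hee') (by nlinarith [mul_pos (sub_pos.2 he1) (sub_pos.2 he1')])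
  nlinarith [mul_pos he he']

lemma norm_eq_one_of_mem_closure {Ω : Set E3} (hΩ : Ω ⊆ sphere2) {x : E3}
    (hx : x ∈ closure Ω) : ‖x‖ = 1 :=
  mem_sphere_zero_iff_norm.1 (closure_minimal hΩ isClosed_sphere hx)

lemma mem_tracing_singleton {Ω : Set E3} {ρ : E3 → ℝ} {P x : E3} :
    x ∈ tracing Ω ρ {P} ↔ x ∈ closure Ω ∧ ∃ d, IsSupportingAt Ω ρ P d x := by
  simp [tracing]

section Supporting

variable {Ω : Set E3} {ρ : E3 → ℝ} {P : E3} {d : ℝ} {x₀ : E3}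

lemma IsSupportingAt.param_le (hΩ : Ω ⊆ sphere2) (h : IsSupportingAt Ω ρ P d x₀) {d' : ℝ}
    {x : E3} (h' : IsSupportingAt Ω ρ P d' x) (hx : x ∈ closure Ω) : d' ≤ d := by
  by_contra! hlt
  have := polarRadius_lt_polarRadius h.1 (norm_eq_one_of_mem_closure hΩ hx) h.2.1 hlt
  linarith [h.2.2.1 x hx, h'.2.2.2]

lemma IsSupportingAt.eq_polarRadius_of_mem_tracing (hΩ : Ω ⊆ sphere2)
    (h : IsSupportingAt Ω ρ P d x₀) (hx₀ : x₀ ∈ closure Ω) {x : E3}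
    (hx : x ∈ tracing Ω ρ {P}) : ρ x = polarRadius P d x := by
  obtain ⟨hxΩ, d', h'⟩ := mem_tracing_singleton.1 hx
  obtain rfl : d' = d := le_antisymm (h.param_le hΩ h' hxΩ) (h'.param_le hΩ h hx₀)
  exact h'.2.2.2

end Supporting

lemma rinner_eq_of_polarRadius_eq {P₁ P₂ x : E3} (hP₁ : P₁ ≠ 0) (hP₂ : P₂ ≠ 0) {d₁ d₂ : ℝ}
    (hd₁ : 0 < d₁) (hd₂ : 0 < d₂) (hx : ‖x‖ = 1)
    (h : polarRadius P₁ d₁ x = polarRadius P₂ d₂ x) :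
    rinner x (d₁ • ecc P₂ d₂ • axisDir P₂ - d₂ • ecc P₁ d₁ • axisDir P₁) = d₁ - d₂ := by
  rw [polarRadius, polarRadius, div_eq_div_iff (one_sub_ecc_mul_rinner_pos hP₁ hd₁ hx).ne'
    (one_sub_ecc_mul_rinner_pos hP₂ hd₂ hx).ne'] at h
  simp only [rinner, inner_sub_right, inner_smul_right] at h ⊢
  linarith

lemma eq_of_ecc_smul_axisDir_eq {P₁ P₂ : E3} (hP₁ : P₁ ≠ 0) (hP₂ : P₂ ≠ 0) {d : ℝ} (hd : 0 < d)
    (h : ecc P₁ d • axisDir P₁ = ecc P₂ d • axisDir P₂) : P₁ = P₂ := by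
  have he : ecc P₁ d = ecc P₂ d := by
    simpa [norm_smul, norm_axisDir, hP₁, hP₂, abs_of_pos (ecc_pos _ _)] using congrArg norm h
  have hm : axisDir P₁ = axisDir P₂ := by
    rw [he] at h
    exact smul_right_injective E3 (ecc_pos P₂ d).ne' h
  have hn : ‖P₁‖ = ‖P₂‖ := by
    have h₁ := ecc_mul_ecc_add P₁ d
    have h₂ := ecc_mul_ecc_add P₂ d
    rw [he] at h₁
    have : d / ‖P₁‖ = d / ‖P₂‖ := by nlinarith [ecc_pos P₂ d]
    rw [div_eq_div_iff (norm_ne_zero_iff.2 hP₁) (norm_ne_zero_iff.2 hP₂)] at this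
    exact (mul_left_cancel₀ hd.ne' this).symm
  rw [← norm_smul_axisDir P₁, ← norm_smul_axisDir P₂, hm, hn]

lemma hausdorffMeasure_range_eq_zero_of_contDiff {E F : Type*} [NormedAddCommGroup E]
    [NormedSpace ℝ E] [FiniteDimensional ℝ E] [NormedAddCommGroup F] [NormedSpace ℝ F]
    [MeasurableSpace F] [BorelSpace F] {γ : E → F} (hγ : ContDiff ℝ 1 γ) {s : NNReal}
    (hs : Module.finrank ℝ E < s) : μH[s] (range γ) = 0 :=
  hausdorffMeasure_of_dimH_lt <| hγ.dimH_range_le.trans_lt <| by exact_mod_cast hs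

section SphereSection

variable {F : Type*} [NormedAddCommGroup F] [InnerProductSpace ℝ F]

lemma sphere_inter_hyperplane_subset_range (b : OrthonormalBasis (Fin 3) ℝ F) (R h : ℝ) :
    {x : F | ‖x‖ = R ∧ inner ℝ (b 0) x = h} ⊆ range fun θ : ℝ =>
      h • b 0 + (√(R ^ 2 - h ^ 2) * Real.cos θ) • b 1 +
        (√(R ^ 2 - h ^ 2) * Real.sin θ) • b 2 := by
  rintro x ⟨rfl, hx⟩
  set z : ℂ := ⟨inner ℝ (b 1) x, inner ℝ (b 2) x⟩
  have hz : ‖z‖ = √(‖x‖ ^ 2 - h ^ 2) := by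
    have := b.sum_sq_norm_inner_right x
    simp only [Fin.sum_univ_three, Real.norm_eq_abs, sq_abs, hx] at this
    rw [Complex.norm_def, Complex.normSq_mk, ← this]
    ring_nf
  refine ⟨Complex.arg z, ?_⟩
  simp only [← hz, Complex.norm_mul_cos_arg, Complex.norm_mul_sin_arg]
  conv_rhs => rw [← b.sum_repr' x, Fin.sum_univ_three, hx]

lemma hausdorffMeasure_sphere_inter_hyperplane [MeasurableSpace F] [BorelSpace F]
    (hF : Module.finrank ℝ F = 3) (R : ℝ) {w : F} (hw : w ≠ 0) (c : ℝ) :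
    μH[2] {x : F | ‖x‖ = R ∧ inner ℝ x w = c} = 0 := by
  have : FiniteDimensional ℝ F := Module.finite_of_finrank_eq_succ hF
  obtain ⟨b, hb⟩ := Orthonormal.exists_orthonormalBasis_extension_of_card_eq (ι := Fin 3)
    (by simpa using hF) (v := fun _ => ‖w‖⁻¹ • w) (s := {0})
    ⟨fun _ => norm_smul_inv_norm hw, fun i j hij => (hij (Subsingleton.elim i j)).elim⟩
  have hsub := sphere_inter_hyperplane_subset_range b R (‖w‖⁻¹ * c)
  refine measure_mono_null (fun x hx => hsub ⟨hx.1, ?_⟩)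
    (hausdorffMeasure_range_eq_zero_of_contDiff (s := 2) (by fun_prop) (by simp))
  rw [hb 0 (mem_singleton 0), inner_smul_left, real_inner_comm, hx.2]
  simp

end SphereSection

lemma tracing_inter_tracing_null {Ω : Set E3} (hΩ : Ω ⊆ sphere2) (ρ : E3 → ℝ) {P₁ P₂ : E3}
    (hne : P₁ ≠ P₂) : μH[2] (tracing Ω ρ {P₁} ∩ tracing Ω ρ {P₂}) = 0 := by
  rcases (tracing Ω ρ {P₁} ∩ tracing Ω ρ {P₂}).eq_empty_or_nonempty with h | ⟨x₀, hx₁, hx₂⟩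
  · rw [h, measure_empty]
  obtain ⟨hx₀, d₁, h₁⟩ := mem_tracing_singleton.1 hx₁
  obtain ⟨-, d₂, h₂⟩ := mem_tracing_singleton.1 hx₂
  set w := d₁ • ecc P₂ d₂ • axisDir P₂ - d₂ • ecc P₁ d₁ • axisDir P₁
  have hsub : tracing Ω ρ {P₁} ∩ tracing Ω ρ {P₂} ⊆ {x | ‖x‖ = 1 ∧ inner ℝ x w = d₁ - d₂} := by
    rintro x ⟨hxP₁, hxP₂⟩
    have hx := norm_eq_one_of_mem_closure hΩ hxP₁.1
    refine ⟨hx, rinner_eq_of_polarRadius_eq h₁.1 h₂.1 h₁.2.1 h₂.2.1 hx ?_⟩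
    rw [← h₁.eq_polarRadius_of_mem_tracing hΩ hx₀ hxP₁,
      h₂.eq_polarRadius_of_mem_tracing hΩ hx₀ hxP₂]
  have hw : w ≠ 0 := by
    intro hw
    have hd : d₁ = d₂ := by
      have := (hsub ⟨hx₁, hx₂⟩).2
      rw [hw, inner_zero_right] at this
      linarith
    subst hd
    exact hne (eq_of_ecc_smul_axisDir_eq h₁.1 h₂.1 h₁.2.1
      (smul_right_injective E3 h₁.2.1.ne' (sub_eq_zero.1 hw).symm))
  exact measure_mono_null hsub
    (hausdorffMeasure_sphere_inter_hyperplane finrank_euclideanSpace_fin 1 hw _)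

theorem ambigSet_null_of_countable_target_general
    (Ω : Set E3) (hΩ : Ω ⊆ sphere2)
    (D : Set E3) (hDc : D.Countable)
    (ρ : E3 → ℝ) :
    μH[2] (ambigSet Ω D ρ) = 0 := by
  have hsub : ambigSet Ω D ρ ⊆
      ⋃ P₁ ∈ D, ⋃ P₂ ∈ D \ {P₁}, tracing Ω ρ {P₁} ∩ tracing Ω ρ {P₂} := by
    rintro x ⟨-, P₁, hP₁, P₂, hP₂, hne, hx₁, hx₂⟩
    exact mem_biUnion hP₁ (mem_biUnion ⟨hP₂, hne.symm⟩ ⟨hx₁, hx₂⟩)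
  refine measure_mono_null hsub ((measure_biUnion_null_iff hDc).2 fun P₁ _ => ?_)
  exact (measure_biUnion_null_iff (hDc.mono sdiff_subset)).2 fun P₂ hP₂ =>
    tracing_inter_tracing_null hΩ ρ (Ne.symm hP₂.2)

/-- If the target `D` is countable (or finite) with `O ∉ closure D` and
`σ = {ρ(x)x}` is a reflector from `closure Ω` to `D`, then the set of directions traced
to two distinct target points has surface measure zero. -/
theorem ambigSet_null_of_countable_target
    (Ω : Set E3) (hΩ : Ω ⊆ sphere2) (hfr : μH[2] (sphFrontier Ω) = 0)
    (D : Set E3) (hDc : D.Countable) (hO : (0 : E3) ∉ D) (hOcl : (0 : E3) ∉ closure D)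
    (ρ : E3 → ℝ) (hσ : IsReflector Ω D ρ) :
    μH[2] (ambigSet Ω D ρ) = 0 :=
  ambigSet_null_of_countable_target_general Ω hΩ D hDc ρ
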